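/- arXiv:1808.01137 — 6 statements merged into one kernel-verified Lean document; each statement's English description precedes it below -/
import Mathlib

section
/- For all real x ≥ 0, (1+x)·log₂(1+x) + x·log₂(3/4) ≥ 0. -/
theorem stmt_0 (x : ℝ) (hx : 0 ≤ x) :
    (1 + x) * Real.logb 2 (1 + x) + x * Real.logb 2 (3 / 4) ≥ 0 := by
  have h1x : (0:ℝ) < 1 + x := by linarith
  -- key: (1+x) * log(1+x) ≥ x
  have hkey : x ≤ (1 + x) * Real.log (1 + x) := by
    have h := Real.log_le_sub_one_of_pos (show (0:ℝ) < 1/(1+x) by positivity)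
    rw [Real.log_div one_ne_zero (ne_of_gt h1x), Real.log_one] at h
    have : -Real.log (1+x) ≤ 1/(1+x) - 1 := by linarith
    have h2 : (1+x) * (-Real.log (1+x)) ≤ (1+x) * (1/(1+x) - 1) :=
      mul_le_mul_of_nonneg_left this (le_of_lt h1x)
    have h3 : (1+x) * (1/(1+x) - 1) = -x := by field_simp; ring
    nlinarith
  -- log (3/4) ≥ -1
  have hlog34 : -1 ≤ Real.log (3/4) := by
    rw [← Real.log_exp (-1)]
    apply Real.log_le_log (Real.exp_pos _)
    rw [Real.exp_neg]
    rw [inv_le_comm₀ (Real.exp_pos 1) (by norm_num)]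
    calc (3/4 : ℝ)⁻¹ = 4/3 := by norm_num
      _ ≤ 2.7182818283 := by norm_num
      _ ≤ Real.exp 1 := Real.exp_one_gt_d9.le
  have hln2 : (0:ℝ) < Real.log 2 := Real.log_pos (by norm_num)
  unfold Real.logb
  have : 0 ≤ (1 + x) * Real.log (1 + x) + x * Real.log (3/4) := by nlinarith
  have := div_nonneg this hln2.le
  calc (0:ℝ) ≤ ((1 + x) * Real.log (1 + x) + x * Real.log (3/4)) / Real.log 2 := this
    _ = (1 + x) * (Real.log (1 + x) / Real.log 2) + x * (Real.log (3/4) / Real.log 2) := by ring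
end

section
/- Let n, k, u, d ∈ ℕ with k + u ≤ n, d ≤ k + u, and let 0 < c < n be a real number. Define a(u,d) = (c/n)^(u+d) · (1 - c/n)^(n-u-d) and b(u,d) = C(n-k, u) · C(k+u, d). If u ≥ 2 and d ≥ 2 and c < 4/3 and n is sufficiently large (n ≥ 12 suffices), then a(u,d)·b(u,d) ≤ a(u-1,d-1)·b(u-1,d-1). -/
set_option maxHeartbeats 1000000 in
theorem stmt_3 (n k u d : ℕ) (c : ℝ) (hn : 12 ≤ n) (hku : k + u ≤ n)
    (hd : d ≤ k + u) (hu : 2 ≤ u) (hd2 : 2 ≤ d)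
    (hc0 : 0 < c) (hc : c < 4 / 3) (hcn : c < n) :
    (c / n) ^ (u + d) * (1 - c / n) ^ (n - u - d) *
        (((n - k).choose u : ℝ) * ((k + u).choose d))
      ≤ (c / n) ^ ((u - 1) + (d - 1)) * (1 - c / n) ^ (n - (u - 1) - (d - 1)) *
        (((n - k).choose (u - 1) : ℝ) * ((k + (u - 1)).choose (d - 1))) := by
  obtain ⟨u', rfl⟩ : ∃ u', u = u' + 2 := ⟨u - 2, by omega⟩
  obtain ⟨d', rfl⟩ : ∃ d', d = d' + 2 := ⟨d - 2, by omega⟩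
  have hu1 : u' + 2 - 1 = u' + 1 := by omega
  have hd1 : d' + 2 - 1 = d' + 1 := by omega
  rw [hu1, hd1]
  have hn0 : (0:ℝ) < n := by positivity
  have hn12 : (12:ℝ) ≤ n := by exact_mod_cast hn
  set x : ℝ := c / n with hxdef
  have hx0 : 0 < x := div_pos hc0 hn0
  have hxn : x * n = c := div_mul_cancel₀ c (ne_of_gt hn0)
  have hx9 : x < 1/9 := by
    rw [hxdef, div_lt_iff₀ hn0]
    nlinarith
  have hx1 : (8:ℝ)/9 < 1 - x := by linarith
  -- choose identities
  have hC1 : (n-k).choose (u'+2) * (u'+2) = (n-k).choose (u'+1) * ((n-k) - (u'+1)) :=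
    Nat.choose_succ_right_eq (n-k) (u'+1)
  have hC2 : (k+u'+2) * (k+u'+1).choose (d'+1) = (k+u'+2).choose (d'+2) * (d'+2) := by
    have := Nat.add_one_mul_choose_eq (k+u'+1) (d'+1)
    simpa using this
  -- real versions
  have hR1 : ((n-k).choose (u'+2) : ℝ) * 2 ≤ ((n-k).choose (u'+1) : ℝ) * n := by
    have h1 : ((n-k).choose (u'+2) : ℝ) * (u'+2) = ((n-k).choose (u'+1) : ℝ) * ((n-k) - (u'+1) : ℕ) := by
      exact_mod_cast congrArg (Nat.cast : ℕ → ℝ) hC1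
    have h2 : (((n-k) - (u'+1) : ℕ) : ℝ) ≤ n := by
      have : (n-k) - (u'+1) ≤ n := by omega
      exact_mod_cast this
    have h3 : ((n-k).choose (u'+2) : ℝ) * 2 ≤ ((n-k).choose (u'+2) : ℝ) * (u'+2) := by
      have hu'0 : (0:ℝ) ≤ (u':ℝ) := Nat.cast_nonneg u'
      have : (2:ℝ) ≤ (u':ℝ) + 2 := by linarith
      have hnn : (0:ℝ) ≤ ((n-k).choose (u'+2) : ℝ) := Nat.cast_nonneg _
      nlinarith
    calc ((n-k).choose (u'+2) : ℝ) * 2 ≤ ((n-k).choose (u'+2) : ℝ) * (u'+2) := h3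
      _ = ((n-k).choose (u'+1) : ℝ) * ((n-k) - (u'+1) : ℕ) := h1
      _ ≤ ((n-k).choose (u'+1) : ℝ) * n := by
          have hnn : (0:ℝ) ≤ ((n-k).choose (u'+1) : ℝ) := Nat.cast_nonneg _
          nlinarith
  have hR2 : ((k+(u'+2)).choose (d'+2) : ℝ) * 2 ≤ ((k+(u'+1)).choose (d'+1) : ℝ) * n := by
    have h1 : ((k+u'+2) : ℝ) * ((k+u'+1).choose (d'+1) : ℝ) = ((k+u'+2).choose (d'+2) : ℝ) * (d'+2) := by
      exact_mod_cast congrArg (Nat.cast : ℕ → ℝ) hC2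
    have h2 : ((k+u'+2 : ℕ) : ℝ) ≤ n := by
      have : k + u' + 2 ≤ n := by omega
      exact_mod_cast this
    have hnn : (0:ℝ) ≤ ((k+u'+2).choose (d'+2) : ℝ) := Nat.cast_nonneg _
    have hnn' : (0:ℝ) ≤ ((k+u'+1).choose (d'+1) : ℝ) := Nat.cast_nonneg _
    have h3 : ((k+u'+2).choose (d'+2) : ℝ) * 2 ≤ ((k+u'+2).choose (d'+2) : ℝ) * (d'+2) := by
      nlinarith
    have heq1 : ((k+(u'+2)).choose (d'+2) : ℝ) = ((k+u'+2).choose (d'+2) : ℝ) := by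
      rw [show k+(u'+2) = k+u'+2 from by omega]
    have heq2 : ((k+(u'+1)).choose (d'+1) : ℝ) = ((k+u'+1).choose (d'+1) : ℝ) := by
      rw [show k+(u'+1) = k+u'+1 from by omega]
    rw [heq1, heq2]
    calc ((k+u'+2).choose (d'+2) : ℝ) * 2 ≤ ((k+u'+2).choose (d'+2) : ℝ) * (d'+2) := h3
      _ = ((k+u'+2) : ℝ) * ((k+u'+1).choose (d'+1) : ℝ) := h1.symm
      _ ≤ ((k+u'+1).choose (d'+1) : ℝ) * n := by
          push_cast at h2 ⊢
          nlinarith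
  set Cu : ℝ := ((n-k).choose (u'+2) : ℝ)
  set Cd : ℝ := ((k+(u'+2)).choose (d'+2) : ℝ)
  set Cu' : ℝ := ((n-k).choose (u'+1) : ℝ)
  set Cd' : ℝ := ((k+(u'+1)).choose (d'+1) : ℝ)
  have hCu0 : 0 ≤ Cu := Nat.cast_nonneg _
  have hCd0 : 0 ≤ Cd := Nat.cast_nonneg _
  have hCu'0 : 0 ≤ Cu' := Nat.cast_nonneg _
  have hCd'0 : 0 ≤ Cd' := Nat.cast_nonneg _
  set B : ℕ := n - (u'+2) - (d'+2) with hB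
  set A : ℕ := n - (u'+1) - (d'+1) with hA
  have hAB : A ≤ B + 2 := by omega
  have h1x0 : (0:ℝ) ≤ 1 - x := by linarith
  have h1x1 : 1 - x ≤ 1 := by linarith
  -- key inequality
  have key : x^2 * (Cu * Cd) * (1-x)^B ≤ (1-x)^A * (Cu' * Cd') := by
    have s1 : Cu * Cd ≤ (Cu' * n / 2) * (Cd' * n / 2) := by
      have a1 : Cu ≤ Cu' * n / 2 := by linarith
      have a2 : Cd ≤ Cd' * n / 2 := by linarith
      exact mul_le_mul a1 a2 hCd0 (by positivity)
    have s2 : x^2 * ((Cu' * n / 2) * (Cd' * n / 2)) = c^2/4 * (Cu' * Cd') := by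
      have : x^2 * ((Cu' * n / 2) * (Cd' * n / 2)) = (x*n)^2/4 * (Cu' * Cd') := by ring
      rw [this, hxn]
    have s3 : c^2/4 ≤ (1-x)^2 := by nlinarith
    have s4 : (1-x)^(B+2) ≤ (1-x)^A := pow_le_pow_of_le_one h1x0 h1x1 hAB
    have sB : (0:ℝ) ≤ (1-x)^B := by positivity
    calc x^2 * (Cu * Cd) * (1-x)^B
        ≤ x^2 * ((Cu' * n / 2) * (Cd' * n / 2)) * (1-x)^B := by
          have := mul_le_mul_of_nonneg_left s1 (le_of_lt (pow_pos hx0 2))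
          nlinarith [mul_le_mul_of_nonneg_right this sB]
      _ = c^2/4 * (Cu' * Cd') * (1-x)^B := by rw [s2]
      _ ≤ (1-x)^2 * (Cu' * Cd') * (1-x)^B := by
          have hP : (0:ℝ) ≤ Cu' * Cd' := mul_nonneg hCu'0 hCd'0
          exact mul_le_mul_of_nonneg_right (mul_le_mul_of_nonneg_right s3 hP) sB
      _ = (1-x)^(B+2) * (Cu' * Cd') := by rw [pow_add]; ring
      _ ≤ (1-x)^A * (Cu' * Cd') := by
          have hP : (0:ℝ) ≤ Cu' * Cd' := mul_nonneg hCu'0 hCd'0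
          exact mul_le_mul_of_nonneg_right s4 hP
  have hexp : u' + 2 + (d' + 2) = (u' + 1 + (d' + 1)) + 2 := by omega
  calc x ^ (u'+2+(d'+2)) * (1-x)^B * (Cu * Cd)
      = x ^ (u'+1+(d'+1)) * (x^2 * (Cu * Cd) * (1-x)^B) := by
        rw [hexp, pow_add]; ring
    _ ≤ x ^ (u'+1+(d'+1)) * ((1-x)^A * (Cu' * Cd')) :=
        mul_le_mul_of_nonneg_left key (le_of_lt (pow_pos hx0 _))
    _ = x ^ (u'+1+(d'+1)) * (1-x)^A * (Cu' * Cd') := by ring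
end

section
/- Let n, k, u ∈ ℕ with u ≥ 2, k + u ≤ n, and let c be a real number with 0 < c < 4/3 and c < n. Define a(u,0) = (c/n)^u · (1-c/n)^(n-u) and b(u,0) = C(n-k, u). Then for n sufficiently large, a(u,0)·b(u,0) ≤ a(1,0)·b(1,0), i.e., the product is maximized at u = 1. -/
theorem stmt_4 :
    ∃ N : ℕ, ∀ (n k u : ℕ) (c : ℝ), N ≤ n → 2 ≤ u → k + u ≤ n →
      0 < c → c < 4 / 3 → c < n →
      (c / n) ^ u * (1 - c / n) ^ (n - u) * ((n - k).choose u : ℝ)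
        ≤ (c / n) ^ 1 * (1 - c / n) ^ (n - 1) * ((n - k).choose 1 : ℝ) := by
  refine ⟨4, fun n k u c hn hu hku hc hc4 hcn => ?_⟩
  have hn0 : (0:ℝ) < n := by
    have : (4:ℝ) ≤ n := by exact_mod_cast hn
    linarith
  set p : ℝ := c / n with hp_def
  set q : ℝ := 1 - c / n with hq_def
  clear_value p q
  have hp0 : 0 < p := by rw [hp_def]; exact div_pos hc hn0
  have hpn : p * n = c := by rw [hp_def]; exact div_mul_cancel₀ c hn0.ne'
  have hq23 : 2/3 < q := by
    have h4n : (4:ℝ) ≤ n := by exact_mod_cast hn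
    have : c / n < 1/3 := by
      rw [div_lt_iff₀ hn0]
      nlinarith
    simp only [hq_def]
    linarith
  have hq0 : 0 < q := by linarith
  set m := n - k with hm
  -- key step: consecutive terms decrease
  have key : ∀ v : ℕ, 1 ≤ v → k + (v+1) ≤ n →
      p ^ (v+1) * q ^ (n - (v+1)) * (m.choose (v+1) : ℝ)
        ≤ p ^ v * q ^ (n - v) * (m.choose v : ℝ) := by
    intro v hv hkv
    have hvn : v + 1 ≤ n := le_trans (Nat.le_add_left _ _) hkv
    have hvm : v + 1 ≤ m := by omega
    have hchoose : m.choose (v+1) * (v+1) = m.choose v * (m - v) :=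
      Nat.choose_succ_right_eq m v
    have hmvcast : ((m - v : ℕ) : ℝ) = (m : ℝ) - v := by
      have hvm' : v ≤ m := by omega
      exact Nat.cast_sub hvm'
    have hA : (0:ℝ) ≤ p ^ v * q ^ (n - (v+1)) * (m.choose v : ℝ) := by positivity
    have hpow : q ^ (n - v) = q ^ (n - (v+1)) * q := by
      rw [← pow_succ]
      congr 1
      omega
    have hmain : p * ((m:ℝ) - v) ≤ q * ((v:ℝ) + 1) := by
      have h1 : p * ((m:ℝ) - v) ≤ c := by
        have hmn : ((m:ℝ) - v) ≤ n := by
          have h1' : (m:ℝ) ≤ n := by exact_mod_cast Nat.sub_le n k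
          have hv0 : (0:ℝ) ≤ v := Nat.cast_nonneg v
          linarith
        calc p * ((m:ℝ) - v) ≤ p * n := mul_le_mul_of_nonneg_left hmn hp0.le
          _ = c := hpn
      have h2 : (4:ℝ)/3 ≤ q * ((v:ℝ)+1) := by
        have hv1 : (2:ℝ) ≤ (v:ℝ) + 1 := by
          have : (1:ℝ) ≤ v := by exact_mod_cast hv
          linarith
        nlinarith
      linarith
    have hcast : ((m.choose (v+1) : ℝ)) * ((v:ℝ)+1) = (m.choose v : ℝ) * ((m:ℝ) - v) := by
      rw [← hmvcast]
      exact_mod_cast hchoose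
    have hv1pos : (0:ℝ) < (v:ℝ) + 1 := by positivity
    rw [hpow]
    have final : p ^ (v+1) * q ^ (n - (v+1)) * (m.choose (v+1) : ℝ) * ((v:ℝ)+1)
        ≤ p ^ v * (q ^ (n - (v+1)) * q) * (m.choose v : ℝ) * ((v:ℝ)+1) := by
      have e1 : p ^ (v+1) * q ^ (n - (v+1)) * (m.choose (v+1) : ℝ) * ((v:ℝ)+1)
          = (p * ((m:ℝ) - v)) * (p ^ v * q ^ (n - (v+1)) * (m.choose v : ℝ)) := by
        calc p ^ (v+1) * q ^ (n - (v+1)) * (m.choose (v+1) : ℝ) * ((v:ℝ)+1)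
            = p ^ (v+1) * q ^ (n - (v+1)) * ((m.choose (v+1) : ℝ) * ((v:ℝ)+1)) := by ring
          _ = p ^ (v+1) * q ^ (n - (v+1)) * ((m.choose v : ℝ) * ((m:ℝ) - v)) := by rw [hcast]
          _ = (p * ((m:ℝ) - v)) * (p ^ v * q ^ (n - (v+1)) * (m.choose v : ℝ)) := by
              rw [pow_succ]; ring
      have e2 : p ^ v * (q ^ (n - (v+1)) * q) * (m.choose v : ℝ) * ((v:ℝ)+1)
          = (q * ((v:ℝ)+1)) * (p ^ v * q ^ (n - (v+1)) * (m.choose v : ℝ)) := by ring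
      rw [e1, e2]
      exact mul_le_mul_of_nonneg_right hmain hA
    exact le_of_mul_le_mul_right final hv1pos
  -- induction
  have main : ∀ v : ℕ, k + (v+1) ≤ n →
      p ^ (v+1) * q ^ (n - (v+1)) * (m.choose (v+1) : ℝ)
        ≤ p ^ 1 * q ^ (n - 1) * (m.choose 1 : ℝ) := by
    intro v
    induction v with
    | zero => intro _; exact le_refl _
    | succ w ih =>
      intro h
      have h1 : k + (w+1) ≤ n := by omega
      exact le_trans (key (w+1) (by omega) h) (ih h1)
  obtain ⟨w, rfl⟩ : ∃ w, u = w + 1 := ⟨u - 1, by omega⟩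
  exact main w hku
end

section
/- Let n ∈ ℕ, let c ∈ (0, n), and let Y' ∈ {0,1}ⁿ be a random string obtained from a fixed y ∈ {0,1}ⁿ by independently flipping each coordinate with probability c/n. Let f: {0,1}ⁿ → ℝ be strictly monotone (f(x) < f(z) whenever x ≠ z and xⁱ ≤ zⁱ for all i), let j be a coordinate with yʲ = 1, let B_j be the event that coordinate j is flipped in Y', and let E_keep be the event f(Y') ≥ f(y). Then P(E_keep | B_j) ≤ P(E_keep | ¬B_j). -/
open scoped Classical

/-- Probability of obtaining `z` from `y` by flipping each coordinate
independently with probability `c / n`. -/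
noncomputable def flipProb (n : ℕ) (c : ℝ) (y z : Fin n → Bool) : ℝ :=
  ∏ i, if z i = y i then 1 - c / n else c / n

lemma flipProb_pos (n : ℕ) (c : ℝ) (hp0 : 0 < c / n) (hp1 : c / n < 1)
    (y z : Fin n → Bool) : 0 < flipProb n c y z := by
  unfold flipProb
  apply Finset.prod_pos
  intro i _
  split <;> linarith

lemma flip_key (n : ℕ) (c : ℝ) (y : Fin n → Bool) (j : Fin n) (hyj : y j = true)
    (z : Fin n → Bool) (hz : z j = false) :
    flipProb n c y (Function.update z j true) * (c / n) =
      flipProb n c y z * (1 - c / n) := by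
  unfold flipProb
  rw [← Finset.mul_prod_erase Finset.univ _ (Finset.mem_univ j),
      ← Finset.mul_prod_erase Finset.univ
        (fun i => if z i = y i then 1 - c / n else c / n) (Finset.mem_univ j)]
  have h1 : Function.update z j true j = true := by simp
  have h2 : (∏ i ∈ Finset.univ.erase j,
      if Function.update z j true i = y i then 1 - c / n else c / n) =
      ∏ i ∈ Finset.univ.erase j, if z i = y i then 1 - c / n else c / n := by
    apply Finset.prod_congr rfl
    intro i hi
    rw [Function.update_of_ne (Finset.ne_of_mem_erase hi)]
  rw [h1, h2, hyj, hz]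
  simp only [if_pos rfl]
  norm_num
  ring

theorem stmt_7 (n : ℕ) (c : ℝ) (hc0 : 0 < c) (hcn : c < n)
    (y : Fin n → Bool) (f : (Fin n → Bool) → ℝ)
    (hmono : ∀ x z : Fin n → Bool, x ≠ z → (∀ i, x i ≤ z i) → f x < f z)
    (j : Fin n) (hyj : y j = true) :
    (∑ z ∈ Finset.univ.filter (fun z : Fin n → Bool => f z ≥ f y ∧ z j ≠ y j),
        flipProb n c y z) /
      (∑ z ∈ Finset.univ.filter (fun z : Fin n → Bool => z j ≠ y j), flipProb n c y z)
    ≤ (∑ z ∈ Finset.univ.filter (fun z : Fin n → Bool => f z ≥ f y ∧ z j = y j),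
        flipProb n c y z) /
      (∑ z ∈ Finset.univ.filter (fun z : Fin n → Bool => z j = y j), flipProb n c y z) := by
  have hn : (0:ℝ) < n := lt_trans hc0 hcn
  have hp0 : 0 < c / n := div_pos hc0 hn
  have hp1 : c / n < 1 := (div_lt_one hn).mpr hcn
  have hpos := flipProb_pos n c hp0 hp1 y
  -- rewrite conditions using hyj
  have hne : ∀ z : Fin n → Bool, (z j ≠ y j) ↔ z j = false := by
    intro z; rw [hyj]; cases z j <;> simp
  have heq : ∀ z : Fin n → Bool, (z j = y j) ↔ z j = true := by
    intro z; rw [hyj]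
  set N1 := ∑ z ∈ Finset.univ.filter (fun z : Fin n → Bool => f z ≥ f y ∧ z j ≠ y j),
      flipProb n c y z with hN1
  set D1 := ∑ z ∈ Finset.univ.filter (fun z : Fin n → Bool => z j ≠ y j),
      flipProb n c y z with hD1
  set N2 := ∑ z ∈ Finset.univ.filter (fun z : Fin n → Bool => f z ≥ f y ∧ z j = y j),
      flipProb n c y z with hN2
  set D2 := ∑ z ∈ Finset.univ.filter (fun z : Fin n → Bool => z j = y j),
      flipProb n c y z with hD2
  -- D relation: D1 * (1 - c/n) = D2 * (c/n)
  have hD : D1 * (1 - c / n) = D2 * (c / n) := by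
    rw [hD1, hD2, Finset.sum_mul, Finset.sum_mul]
    refine Finset.sum_nbij' (fun z => Function.update z j true)
      (fun z => Function.update z j false) ?_ ?_ ?_ ?_ ?_
    · intro a ha
      simp only [Finset.mem_filter, Finset.mem_univ, true_and] at ha ⊢
      rw [heq]; simp
    · intro a ha
      simp only [Finset.mem_filter, Finset.mem_univ, true_and] at ha ⊢
      rw [hne]; simp
    · intro a ha
      simp only [Finset.mem_filter, Finset.mem_univ, true_and, hne] at ha
      funext i
      by_cases hij : i = j
      · subst hij; simp [ha]
      · simp [Function.update_of_ne hij]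
    · intro a ha
      simp only [Finset.mem_filter, Finset.mem_univ, true_and, heq] at ha
      funext i
      by_cases hij : i = j
      · subst hij; simp [ha]
      · simp [Function.update_of_ne hij]
    · intro a ha
      simp only [Finset.mem_filter, Finset.mem_univ, true_and, hne] at ha
      exact (flip_key n c y j hyj a ha).symm
  -- N relation: N1 * (1 - c/n) ≤ N2 * (c/n)
  have hN : N1 * (1 - c / n) ≤ N2 * (c / n) := by
    rw [hN1, hN2, Finset.sum_mul, Finset.sum_mul]
    have step : (∑ z ∈ Finset.univ.filter
          (fun z : Fin n → Bool => f z ≥ f y ∧ z j ≠ y j),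
          flipProb n c y z * (1 - c / n))
        = ∑ z ∈ Finset.univ.filter
          (fun z : Fin n → Bool => f (Function.update z j false) ≥ f y ∧ z j = true),
          flipProb n c y z * (c / n) := by
      refine Finset.sum_nbij' (fun z => Function.update z j true)
        (fun z => Function.update z j false) ?_ ?_ ?_ ?_ ?_
      · intro a ha
        simp only [Finset.mem_filter, Finset.mem_univ, true_and, hne] at ha ⊢
        obtain ⟨hfa, haj⟩ := ha
        constructor
        · have : Function.update (Function.update a j true) j false = a := by
            funext i
            by_cases hij : i = j
            · subst hij; simp [haj]
            · simp [Function.update_of_ne hij]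
          rw [this]; exact hfa
        · simp
      · intro a ha
        simp only [Finset.mem_filter, Finset.mem_univ, true_and, hne] at ha ⊢
        exact ⟨ha.1, by simp⟩
      · intro a ha
        simp only [Finset.mem_filter, Finset.mem_univ, true_and, hne] at ha
        funext i
        by_cases hij : i = j
        · subst hij; simp [ha.2]
        · simp [Function.update_of_ne hij]
      · intro a ha
        simp only [Finset.mem_filter, Finset.mem_univ, true_and] at ha
        funext i
        by_cases hij : i = j
        · subst hij; simp [ha.2]
        · simp [Function.update_of_ne hij]
      · intro a ha
        simp only [Finset.mem_filter, Finset.mem_univ, true_and, hne] at ha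
        exact (flip_key n c y j hyj a ha.2).symm
    rw [step]
    apply Finset.sum_le_sum_of_subset_of_nonneg
    · intro z hz
      simp only [Finset.mem_filter, Finset.mem_univ, true_and, heq] at hz ⊢
      refine ⟨?_, hz.2⟩
      have hlt : f (Function.update z j false) < f z := by
        apply hmono
        · intro h
          have := congrFun h j
          simp [hz.2] at this
        · intro i
          by_cases hij : i = j
          · subst hij; simp
          · simp [Function.update_of_ne hij]
      linarith [hz.1]
    · intro z _ _
      exact mul_nonneg (le_of_lt (hpos z)) (le_of_lt hp0)
  -- Positivity of denominators
  have hD1pos : 0 < D1 := by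
    rw [hD1]
    apply Finset.sum_pos
    · intro z _; exact hpos z
    · refine ⟨Function.update y j false, ?_⟩
      simp only [Finset.mem_filter, Finset.mem_univ, true_and, hne]
      simp
  have hD2pos : 0 < D2 := by
    rw [hD2]
    apply Finset.sum_pos
    · intro z _; exact hpos z
    · exact ⟨y, by simp⟩
  rw [div_le_div_iff₀ hD1pos hD2pos]
  have key : N1 * D2 * (c / n) ≤ N2 * D1 * (c / n) := by
    calc N1 * D2 * (c / n) = N1 * (D2 * (c / n)) := by ring
      _ = N1 * (D1 * (1 - c / n)) := by rw [hD]
      _ = (N1 * (1 - c / n)) * D1 := by ring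
      _ ≤ (N2 * (c / n)) * D1 := by
          apply mul_le_mul_of_nonneg_right hN (le_of_lt hD1pos)
      _ = N2 * D1 * (c / n) := by ring
  exact le_of_mul_le_mul_right key hp0
end

section
/- In the setting of independent bit flips with probability c/n from a state y with exactly k one-bits, let D be the number of one-bits of y flipped to zero in the offspring Y', and let E_keep = {f(Y') ≥ f(y)} for a strictly monotone f with P(E_keep) > 0. Then E[D | E_keep] ≤ E[D] = k·c/n ≤ c. -/
open scoped Classical

/-- Number of one-bits of `y` flipped to zero in `z`. -/
def numDown (n : ℕ) (y z : Fin n → Bool) : ℕ :=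
  (Finset.univ.filter (fun j : Fin n => y j = true ∧ z j = false)).card

private lemma flipProb_nonneg {n : ℕ} {c : ℝ} (h0 : 0 ≤ c / n) (h1 : c / n ≤ 1)
    (y z : Fin n → Bool) : 0 ≤ flipProb n c y z := by
  apply Finset.prod_nonneg; intro i _; split <;> linarith

private lemma sum_flipProb_one (n : ℕ) (c : ℝ) (y : Fin n → Bool) :
    ∑ z : Fin n → Bool, flipProb n c y z = 1 := by
  unfold flipProb
  rw [← Fintype.prod_sum (f := fun (i : Fin n) (b : Bool) =>
      if b = y i then 1 - c / (n:ℝ) else c / n)]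
  rw [← Finset.prod_const_one (s := (Finset.univ : Finset (Fin n)))]
  apply Finset.prod_congr rfl
  intro i _
  rw [Fintype.sum_bool]
  cases y i <;> simp

private lemma sum_flipProb_indic {n : ℕ} {c : ℝ} (y : Fin n → Bool) (j : Fin n)
    (hj : y j = true) :
    ∑ z : Fin n → Bool, flipProb n c y z * (if z j = false then 1 else 0) = c / n := by
  have key : ∀ z : Fin n → Bool,
      flipProb n c y z * (if z j = false then 1 else 0)
      = ∏ i, ((if z i = y i then 1 - c / (n:ℝ) else c / n) *
          (if i = j then (if z i = false then 1 else 0) else 1)) := by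
    intro z
    rw [Finset.prod_mul_distrib, flipProb]
    congr 1
    rw [Finset.prod_eq_single j]
    · simp
    · intro b _ hb; simp [hb]
    · simp
  simp only [key]
  rw [← Fintype.prod_sum (f := fun (i : Fin n) (b : Bool) =>
      (if b = y i then 1 - c / (n:ℝ) else c / n) *
        (if i = j then (if b = false then 1 else 0) else 1))]
  rw [Finset.prod_eq_single j]
  · rw [Fintype.sum_bool]; simp [hj]
  · intro b _ hb; rw [Fintype.sum_bool]; cases y b <;> simp [hb]
  · simp

private lemma key_ineq {n : ℕ} {c : ℝ} (hp0 : 0 ≤ c / n) (hp1 : c / n ≤ 1)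
    (y : Fin n → Bool) (j : Fin n) (hj : y j = true)
    (E : Finset (Fin n → Bool))
    (hE : ∀ z ∈ E, z j = false → Function.update z j true ∈ E) :
    ∑ z ∈ E.filter (fun z => z j = false), flipProb n c y z
      ≤ c / n * ∑ z ∈ E, flipProb n c y z := by
  set F := flipProb n c y with hF
  set A := E.filter (fun z => z j = false) with hA
  set B := E.filter (fun z => z j = true) with hB
  set u : (Fin n → Bool) → (Fin n → Bool) := fun z => Function.update z j true with hu
  have hpoint : ∀ z ∈ A, (1 - c / n) * F z = (c / n) * F (u z) := by
    intro z hz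
    have hzj : z j = false := (Finset.mem_filter.mp hz).2
    have h1 : F z = (c / n) * ∏ i ∈ Finset.univ.erase j,
        (if z i = y i then 1 - c / (n:ℝ) else c / n) := by
      rw [hF, flipProb, ← Finset.mul_prod_erase _ _ (Finset.mem_univ j), hzj, hj]
      norm_num
    have h2 : F (u z) = (1 - c / n) * ∏ i ∈ Finset.univ.erase j,
        (if z i = y i then 1 - c / (n:ℝ) else c / n) := by
      rw [hF, flipProb, ← Finset.mul_prod_erase _ _ (Finset.mem_univ j)]
      rw [hu]
      simp only [Function.update_self, hj, if_pos rfl]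
      congr 1
      apply Finset.prod_congr rfl
      intro i hi
      simp only [Function.update_of_ne (Finset.mem_erase.mp hi).1]
    rw [h1, h2]; ring
  have himg : ∀ z ∈ A, u z ∈ B := by
    intro z hz
    have hm := Finset.mem_filter.mp hz
    refine Finset.mem_filter.mpr ⟨hE z hm.1 hm.2, ?_⟩
    simp [hu]
  have hinj : Set.InjOn u A := by
    intro z1 h1 z2 h2 heq
    funext i
    by_cases hij : i = j
    · subst hij
      rw [(Finset.mem_filter.mp h1).2, (Finset.mem_filter.mp h2).2]
    · have h : Function.update z1 j true i = Function.update z2 j true i := congrFun heq i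
      rwa [Function.update_of_ne hij, Function.update_of_ne hij] at h
  have hnn : ∀ z, 0 ≤ F z := flipProb_nonneg hp0 hp1 y
  have h3 : ∑ z ∈ A, F (u z) ≤ ∑ z ∈ B, F z := by
    rw [← Finset.sum_image hinj]
    apply Finset.sum_le_sum_of_subset_of_nonneg
    · intro z hz
      obtain ⟨w, hw, rfl⟩ := Finset.mem_image.mp hz
      exact himg w hw
    · intro z _ _; exact hnn z
  have h4 : (1 - c / n) * ∑ z ∈ A, F z ≤ (c / n) * ∑ z ∈ B, F z := by
    rw [Finset.mul_sum, Finset.mul_sum]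
    calc ∑ z ∈ A, (1 - c / n) * F z = ∑ z ∈ A, (c / n) * F (u z) :=
          Finset.sum_congr rfl hpoint
      _ ≤ ∑ z ∈ B, (c / n) * F z := by
          rw [← Finset.mul_sum, ← Finset.mul_sum]
          exact mul_le_mul_of_nonneg_left h3 hp0
  have hsplit : ∑ z ∈ A, F z + ∑ z ∈ B, F z = ∑ z ∈ E, F z := by
    rw [hA, hB, ← Finset.sum_filter_add_sum_filter_not E (fun z => z j = false)]
    congr 1
    apply Finset.sum_congr _ (fun _ _ => rfl)
    apply Finset.filter_congr
    intro z _
    simp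
  have hAnn : (0:ℝ) ≤ ∑ z ∈ A, F z := Finset.sum_nonneg fun z _ => hnn z
  nlinarith [h4, hsplit]

theorem stmt_8 (n k : ℕ) (c : ℝ) (hc0 : 0 < c) (hcn : c < n)
    (y : Fin n → Bool) (hk : (Finset.univ.filter (fun j : Fin n => y j = true)).card = k)
    (f : (Fin n → Bool) → ℝ)
    (hmono : ∀ x z : Fin n → Bool, x ≠ z → (∀ i, x i ≤ z i) → f x < f z)
    (hpos : 0 < ∑ z ∈ Finset.univ.filter (fun z : Fin n → Bool => f z ≥ f y),
      flipProb n c y z) :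
    (∑ z ∈ Finset.univ.filter (fun z : Fin n → Bool => f z ≥ f y),
          flipProb n c y z * numDown n y z) /
        (∑ z ∈ Finset.univ.filter (fun z : Fin n → Bool => f z ≥ f y), flipProb n c y z)
      ≤ ∑ z : Fin n → Bool, flipProb n c y z * numDown n y z ∧
    (∑ z : Fin n → Bool, flipProb n c y z * numDown n y z) = k * c / n ∧
    (k : ℝ) * c / n ≤ c := by
  have hn0 : (0:ℝ) < n := lt_trans hc0 hcn
  have hp0 : 0 ≤ c / n := le_of_lt (div_pos hc0 hn0)
  have hp1 : c / n ≤ 1 := by rw [div_le_one hn0]; exact le_of_lt hcn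
  set E := Finset.univ.filter (fun z : Fin n → Bool => f z ≥ f y) with hEdef
  set ones := Finset.univ.filter (fun j : Fin n => y j = true) with hones
  have hnn : ∀ z, 0 ≤ flipProb n c y z := flipProb_nonneg hp0 hp1 y
  -- numDown as a sum of indicators
  have hnd : ∀ z : Fin n → Bool, (numDown n y z : ℝ)
      = ∑ j ∈ ones, (if z j = false then 1 else 0) := by
    intro z
    rw [numDown, ← Finset.filter_filter, Finset.card_filter]
    push_cast
    rfl
  -- part 2 : total expectation
  have part2 : (∑ z : Fin n → Bool, flipProb n c y z * numDown n y z) = k * c / n := by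
    calc ∑ z : Fin n → Bool, flipProb n c y z * numDown n y z
        = ∑ z : Fin n → Bool, ∑ j ∈ ones,
            flipProb n c y z * (if z j = false then 1 else 0) := by
          apply Finset.sum_congr rfl
          intro z _
          rw [hnd z, Finset.mul_sum]
      _ = ∑ j ∈ ones, ∑ z : Fin n → Bool,
            flipProb n c y z * (if z j = false then 1 else 0) := Finset.sum_comm
      _ = ∑ j ∈ ones, c / n := by
          apply Finset.sum_congr rfl
          intro j hj
          exact sum_flipProb_indic y j (Finset.mem_filter.mp hj).2
      _ = k * c / n := by
          rw [Finset.sum_const, hk]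
          push_cast
          ring
  refine ⟨?_, part2, ?_⟩
  · -- conditional expectation bound
    rw [part2, div_le_iff₀ hpos]
    have hE : ∀ᵉ (j ∈ ones), ∀ z ∈ E, z j = false → Function.update z j true ∈ E := by
      intro j hj z hz hzj
      have hyj : y j = true := (Finset.mem_filter.mp hj).2
      have hfz : f z ≥ f y := (Finset.mem_filter.mp hz).2
      have hne : z ≠ Function.update z j true := by
        intro h
        have := congrFun h j
        rw [Function.update_self, hzj] at this
        exact Bool.false_ne_true this
      have hle : ∀ i, z i ≤ Function.update z j true i := by
        intro i
        by_cases hij : i = j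
        · subst hij; rw [Function.update_self]; exact Bool.le_true _
        · rw [Function.update_of_ne hij]
      refine Finset.mem_filter.mpr ⟨Finset.mem_univ _, ?_⟩
      exact le_of_lt (lt_of_le_of_lt hfz (hmono z _ hne hle))
    calc ∑ z ∈ E, flipProb n c y z * numDown n y z
        = ∑ j ∈ ones, ∑ z ∈ E,
            flipProb n c y z * (if z j = false then 1 else 0) := by
          rw [Finset.sum_comm]
          apply Finset.sum_congr rfl
          intro z _
          rw [hnd z, Finset.mul_sum]
      _ ≤ ∑ j ∈ ones, (c / n) * ∑ z ∈ E, flipProb n c y z := by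
          apply Finset.sum_le_sum
          intro j hj
          have this1 : ∑ z ∈ E, flipProb n c y z * (if z j = false then 1 else 0)
              = ∑ z ∈ E.filter (fun z => z j = false), flipProb n c y z :=
            (Finset.sum_congr rfl (fun z _ => by split <;> simp)).trans
              (Finset.sum_filter _ _).symm
          rw [this1]
          exact key_ineq hp0 hp1 y j (Finset.mem_filter.mp hj).2 E (hE j hj)
      _ = ↑k * c / n * ∑ z ∈ E, flipProb n c y z := by
          rw [Finset.sum_const, hk, nsmul_eq_mul]
          ring
  · -- k*c/n ≤ c
    have hkn : (k:ℝ) ≤ n := by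
      rw [← hk]
      have := Finset.card_filter_le (Finset.univ : Finset (Fin n))
          (fun j : Fin n => y j = true)
      rw [Finset.card_univ, Fintype.card_fin] at this
      exact_mod_cast this
    rw [div_le_iff₀ hn0]
    nlinarith
end

section
/- Let (n_t, u_t, d_t) for t = 0, ..., T-1 be natural numbers describing a trajectory: #1₀ = k, #1_{t+1} = #1_t + u_t - d_t, #0_t = n - #1_t, with all binomial coefficients below well-defined, and #1_T = n. Then the telescoping identity holds: Π_{t=0}^{T-1} [ C(#0_{t+1}, d_t)·C(#1_{t+1}+d_t, u_t) ] / [ C(#0_t, u_t)·C(#1_t+u_t, d_t) ] = C(n, k) / C(n, n) = C(n, k). -/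
lemma stmt_10_step (n a a' uu dd : ℕ) (ha : a ≤ n) (ha' : a' ≤ n) (hs : a' + dd = a + uu)
    (h1 : uu ≤ n - a) (h2 : dd ≤ n - a') (h3 : dd ≤ a + uu) (h4 : uu ≤ a' + dd) :
    ((n - a').choose dd : ℝ) * ((a' + dd).choose uu) /
      (((n - a).choose uu : ℝ) * ((a + uu).choose dd))
      = (n.choose a : ℝ) / (n.choose a') := by
  have e1 : a' + dd - uu = a := by omega
  have e2 : a + uu - dd = a' := by omega
  have e3 : n - a' - dd = n - a - uu := by omega
  have hf : ∀ m : ℕ, ((Nat.factorial m : ℝ)) ≠ 0 := fun m =>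
    Nat.cast_ne_zero.mpr (Nat.factorial_ne_zero m)
  rw [Nat.cast_choose ℝ h2, Nat.cast_choose ℝ h4, Nat.cast_choose ℝ h1, Nat.cast_choose ℝ h3,
    Nat.cast_choose ℝ ha, Nat.cast_choose ℝ ha', e1, e2, e3, hs]
  field_simp

theorem stmt_10 (n k T : ℕ) (ones u d : ℕ → ℕ)
    (h0 : ones 0 = k) (hT : ones T = n)
    (hle : ∀ t, ones t ≤ n)
    (hstep : ∀ t < T, ones (t + 1) + d t = ones t + u t)
    (hwell : ∀ t < T, u t ≤ n - ones t ∧ d t ≤ n - ones (t + 1) ∧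
      d t ≤ ones t + u t ∧ u t ≤ ones (t + 1) + d t) :
    (∏ t ∈ Finset.range T,
        (((n - ones (t + 1)).choose (d t) : ℝ) * ((ones (t + 1) + d t).choose (u t))) /
          (((n - ones t).choose (u t) : ℝ) * ((ones t + u t).choose (d t))))
      = (n.choose k : ℝ) / (n.choose n : ℝ) ∧
    ((n.choose k : ℝ) / (n.choose n : ℝ)) = (n.choose k : ℝ) := by
  have hcz : ∀ m ≤ n, ((n.choose m : ℝ)) ≠ 0 := fun m hm =>
    Nat.cast_ne_zero.mpr (Nat.choose_pos hm).ne'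
  have key : ∀ m ≤ T,
      (∏ t ∈ Finset.range m,
        (((n - ones (t + 1)).choose (d t) : ℝ) * ((ones (t + 1) + d t).choose (u t))) /
          (((n - ones t).choose (u t) : ℝ) * ((ones t + u t).choose (d t))))
      = (n.choose k : ℝ) / (n.choose (ones m) : ℝ) := by
    intro m hm
    induction m with
    | zero => simp [h0, div_self (hcz k (h0 ▸ hle 0))]
    | succ m ih =>
      have hmT : m < T := hm
      rw [Finset.prod_range_succ, ih (le_of_lt hmT)]
      obtain ⟨w1, w2, w3, w4⟩ := hwell m hmT
      rw [stmt_10_step n (ones m) (ones (m + 1)) (u m) (d m) (hle m) (hle (m + 1))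
        (hstep m hmT) w1 w2 w3 w4]
      rw [div_mul_div_comm, mul_comm ((n.choose k : ℝ)),
        mul_div_mul_left _ _ (hcz (ones m) (hle m))]
  constructor
  · rw [key T le_rfl, hT]
  · simp
end
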